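/- Let H0, H1 be complex Hilbert spaces, D, D* closed subspaces of H0, V : D → D* a surjective linear isometry, Δ = H0 ⊖ D, Δ* = H0 ⊖ D*, and let U0 = [[A0,B0],[C0,0]] : H0 ⊕ Δ* → H0 ⊕ Δ be the universal colligation (A0 h = V(P_D h), B0 δ* = δ*, C0 h = P_Δ h). Then a bounded operator W on H0 ⊕ H1 is unitary and satisfies W(d, 0) = (V d, 0) for all d ∈ D if and only if there exists a unitary operator U1 = [[A1,B1],[C1,D1]] : H1 ⊕ Δ → H1 ⊕ Δ* such that W equals the feedback connection F_ℓ(U0,U1), i.e. W(h, h1) = (A0 h + B0 D1 C0 h + B0 C1 h1, B1 C0 h + A1 h1) for all h ∈ H0, h1 ∈ H1. In this case U1 is recovered from W by A1 = P_{H1} W|_{H1}, B1 δ = P_{H1} W(δ, 0) for δ ∈ Δ, C1 h1 = P_{Δ*}(first component of W(0,h1)), D1 δ = P_{Δ*}(first component of W(δ,0)). -/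

import Mathlib

/-!
Since `W` is unitary and maps `D ⊕ 0` onto `D* ⊕ 0`, it maps `Δ ⊕ H1`, the orthogonal complement
of `D ⊕ 0`, onto `Δ* ⊕ H1`. The restriction of `W` to `Δ ⊕ H1`, read as an operator
`H1 ⊕ Δ → H1 ⊕ Δ*`, is the unitary colligation `U1`, and splitting `h = P_D h + P_Δ h` shows
that `W = F_ℓ(U0, U1)`. Conversely, `F_ℓ(U0, U1)` acts as `V` on `D` and as `U1` on `Δ ⊕ H1`,
and both pieces are unitary between mutually orthogonal subspaces.
-/

section

open Submodule

variable {𝕜 H0 H1 : Type*} [RCLike 𝕜]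
  [NormedAddCommGroup H0] [InnerProductSpace 𝕜 H0]
  [NormedAddCommGroup H1] [InnerProductSpace 𝕜 H1]

local notation "⟪" x ", " y "⟫" => inner 𝕜 x y

theorem inner_fst_add_inner_snd_map_map {K0 K1 : Type*}
    [NormedAddCommGroup K0] [InnerProductSpace 𝕜 K0]
    [NormedAddCommGroup K1] [InnerProductSpace 𝕜 K1]
    (W : (H0 × H1) →ₗ[𝕜] (K0 × K1))
    (hW : ∀ p, ‖(W p).1‖ ^ 2 + ‖(W p).2‖ ^ 2 = ‖p.1‖ ^ 2 + ‖p.2‖ ^ 2) (p q : H0 × H1) :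
    ⟪(W p).1, (W q).1⟫ + ⟪(W p).2, (W q).2⟫ = ⟪p.1, q.1⟫ + ⟪p.2, q.2⟫ := by
  let f : WithLp 2 (H0 × H1) →ₗᵢ[𝕜] WithLp 2 (K0 × K1) :=
    { toLinearMap := (WithLp.linearEquiv 2 𝕜 (K0 × K1)).symm.toLinearMap ∘ₗ W ∘ₗ
        (WithLp.linearEquiv 2 𝕜 (H0 × H1)).toLinearMap
      norm_map' := fun x => by
        rw [WithLp.prod_norm_eq_of_L2, WithLp.prod_norm_eq_of_L2]
        exact congrArg Real.sqrt (hW x.ofLp) }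
  exact f.inner_map_map (WithLp.toLp 2 p) (WithLp.toLp 2 q)

section OrthogonalDecomposition

variable {K : Submodule 𝕜 H0}

theorem norm_coe_add_coe_orthogonal_sq (u : K) (v : Kᗮ) :
    ‖(u : H0) + v‖ ^ 2 = ‖u‖ ^ 2 + ‖v‖ ^ 2 := by
  rw [sq, sq, sq]
  exact norm_add_sq_eq_norm_sq_add_norm_sq_of_inner_eq_zero _ _
    (inner_right_of_mem_orthogonal u.2 v.2)

theorem exists_coe_add_coe_orthogonal_eq [K.HasOrthogonalProjection] (h : H0) :
    ∃ (u : K) (v : Kᗮ), (u : H0) + v = h :=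
  ⟨K.orthogonalProjectionOnto h, Kᗮ.orthogonalProjectionOnto h, by simp⟩

end OrthogonalDecomposition

section Extension

variable {D Dst : Submodule 𝕜 H0} (V : D ≃ₗᵢ[𝕜] Dst)

theorem fst_map_mem_orthogonal (W : (H0 × H1) →ₗ[𝕜] (H0 × H1))
    (hW : ∀ p, ‖(W p).1‖ ^ 2 + ‖(W p).2‖ ^ 2 = ‖p.1‖ ^ 2 + ‖p.2‖ ^ 2)
    (hext : ∀ d : D, W ((d : H0), 0) = ((V d : H0), 0)) {p : H0 × H1} (hp : p.1 ∈ Dᗮ) :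
    (W p).1 ∈ Dstᗮ := by
  rw [mem_orthogonal]
  intro u hu
  have h := inner_fst_add_inner_snd_map_map W hW ((V.symm ⟨u, hu⟩ : H0), 0) p
  rw [hext] at h
  simpa [inner_right_of_mem_orthogonal (V.symm ⟨u, hu⟩).2 hp] using h

variable [D.HasOrthogonalProjection]
  (A1 : H1 →L[𝕜] H1) (B1 : Dᗮ →L[𝕜] H1) (C1 : H1 →L[𝕜] Dstᗮ) (D1 : Dᗮ →L[𝕜] Dstᗮ)

/-- `F_ℓ(U0, U1)`, for `U0` the universal colligation of `V` and `U1 = [[A1, B1], [C1, D1]]`. -/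
noncomputable def feedbackConnection (p : H0 × H1) : H0 × H1 :=
  ((V (D.orthogonalProjectionOnto p.1) : H0) + (D1 (Dᗮ.orthogonalProjectionOnto p.1) : H0)
      + (C1 p.2 : H0),
    B1 (Dᗮ.orthogonalProjectionOnto p.1) + A1 p.2)

theorem feedbackConnection_apply_add (d : D) (δ : Dᗮ) (h1 : H1) :
    feedbackConnection V A1 B1 C1 D1 ((d : H0) + δ, h1) =
      ((V d : H0) + (C1 h1 + D1 δ : Dstᗮ), A1 h1 + B1 δ) := by
  simp [feedbackConnection, orthogonalProjectionOnto_apply_of_mem_orthogonal δ.2,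
    orthogonalProjectionOnto_orthogonal_apply_eq_zero d.2, add_comm, add_left_comm]

theorem feedbackConnection_apply_mem (d : D) :
    feedbackConnection V A1 B1 C1 D1 ((d : H0), 0) = ((V d : H0), 0) := by
  simpa using feedbackConnection_apply_add V A1 B1 C1 D1 d 0 0

theorem feedbackConnection_apply_orthogonal (δ : Dᗮ) (h1 : H1) :
    feedbackConnection V A1 B1 C1 D1 ((δ : H0), h1) =
      (((C1 h1 + D1 δ : Dstᗮ) : H0), A1 h1 + B1 δ) := by
  simpa using feedbackConnection_apply_add V A1 B1 C1 D1 0 δ h1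

theorem feedbackConnection_apply_inr (h1 : H1) :
    feedbackConnection V A1 B1 C1 D1 (0, h1) = ((C1 h1 : H0), A1 h1) := by
  simpa using feedbackConnection_apply_orthogonal V A1 B1 C1 D1 0 h1

theorem feedbackConnection_apply_inl_orthogonal (δ : Dᗮ) :
    feedbackConnection V A1 B1 C1 D1 ((δ : H0), 0) = ((D1 δ : H0), B1 δ) := by
  simpa using feedbackConnection_apply_orthogonal V A1 B1 C1 D1 δ 0

theorem feedbackConnection_norm_sq_iff :
    (∀ p, ‖(feedbackConnection V A1 B1 C1 D1 p).1‖ ^ 2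
        + ‖(feedbackConnection V A1 B1 C1 D1 p).2‖ ^ 2 = ‖p.1‖ ^ 2 + ‖p.2‖ ^ 2) ↔
      ∀ (h1 : H1) (δ : Dᗮ), ‖A1 h1 + B1 δ‖ ^ 2 + ‖C1 h1 + D1 δ‖ ^ 2 = ‖h1‖ ^ 2 + ‖δ‖ ^ 2 := by
  constructor
  · intro hF h1 δ
    have h := hF ((δ : H0), h1)
    rw [feedbackConnection_apply_orthogonal, norm_coe, norm_coe] at h
    linarith
  · rintro hU ⟨h, h1⟩
    obtain ⟨d, δ, rfl⟩ := exists_coe_add_coe_orthogonal_eq (K := D) h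
    rw [feedbackConnection_apply_add, norm_coe_add_coe_orthogonal_sq,
      norm_coe_add_coe_orthogonal_sq, LinearIsometryEquiv.norm_map]
    linarith [hU h1 δ]

theorem feedbackConnection_surjective_iff [Dst.HasOrthogonalProjection] :
    Function.Surjective (feedbackConnection V A1 B1 C1 D1) ↔
      ∀ (y : H1) (ε : Dstᗮ), ∃ (h1 : H1) (δ : Dᗮ), A1 h1 + B1 δ = y ∧ C1 h1 + D1 δ = ε := by
  constructor
  · intro hF y ε
    obtain ⟨⟨h, h1⟩, hp⟩ := hF ((ε : H0), y)
    obtain ⟨d, δ, rfl⟩ := exists_coe_add_coe_orthogonal_eq (K := D) h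
    rw [feedbackConnection_apply_add, Prod.mk.injEq] at hp
    refine ⟨h1, δ, hp.2, ?_⟩
    simpa [orthogonalProjectionOnto_orthogonal_apply_eq_zero (V d).2] using
      congrArg Dstᗮ.orthogonalProjectionOnto hp.1
  · rintro hU ⟨x, y⟩
    obtain ⟨h1, δ, hy, hε⟩ := hU y (Dstᗮ.orthogonalProjectionOnto x)
    refine ⟨((V.symm (Dst.orthogonalProjectionOnto x) : H0) + δ, h1), ?_⟩
    rw [feedbackConnection_apply_add, V.apply_symm_apply, hy, hε]
    simp

theorem exists_eq_feedbackConnection (W : (H0 × H1) →L[𝕜] (H0 × H1))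
    (hW : ∀ p, ‖(W p).1‖ ^ 2 + ‖(W p).2‖ ^ 2 = ‖p.1‖ ^ 2 + ‖p.2‖ ^ 2)
    (hext : ∀ d : D, W ((d : H0), 0) = ((V d : H0), 0)) :
    ∃ (A1 : H1 →L[𝕜] H1) (B1 : Dᗮ →L[𝕜] H1) (C1 : H1 →L[𝕜] Dstᗮ) (D1 : Dᗮ →L[𝕜] Dstᗮ),
      ⇑W = feedbackConnection V A1 B1 C1 D1 := by
  open ContinuousLinearMap in
  refine ⟨snd 𝕜 H0 H1 ∘L W ∘L inr 𝕜 H0 H1, snd 𝕜 H0 H1 ∘L W ∘L inl 𝕜 H0 H1 ∘L Dᗮ.subtypeL,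
    (fst 𝕜 H0 H1 ∘L W ∘L inr 𝕜 H0 H1).codRestrict Dstᗮ fun _ =>
      fst_map_mem_orthogonal V W.toLinearMap hW hext (zero_mem _),
    (fst 𝕜 H0 H1 ∘L W ∘L inl 𝕜 H0 H1 ∘L Dᗮ.subtypeL).codRestrict Dstᗮ fun δ =>
      fst_map_mem_orthogonal V W.toLinearMap hW hext δ.2, ?_⟩
  funext ⟨h, h1⟩
  obtain ⟨d, δ, rfl⟩ := exists_coe_add_coe_orthogonal_eq (K := D) h
  have hsplit : W ((d : H0) + δ, h1) = W ((d : H0), 0) + W ((δ : H0), 0) + W (0, h1) := by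
    rw [← map_add, ← map_add]
    simp
  rw [feedbackConnection_apply_add, hsplit, hext]
  change _ = ((V d : H0) + ((W (0, h1)).1 + (W ((δ : H0), 0)).1),
    (W (0, h1)).2 + (W ((δ : H0), 0)).2)
  ext <;> simp <;> abel

end Extension

end

theorem stmt_11 {H0 H1 : Type*}
    [NormedAddCommGroup H0] [InnerProductSpace ℂ H0]
    [NormedAddCommGroup H1] [InnerProductSpace ℂ H1]
    (D Dst : Submodule ℂ H0) [CompleteSpace D] [CompleteSpace Dst]
    (V : D ≃ₗᵢ[ℂ] Dst)
    (W : (H0 × H1) →L[ℂ] (H0 × H1)) :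
    (((∀ p : H0 × H1, ‖(W p).1‖ ^ 2 + ‖(W p).2‖ ^ 2 = ‖p.1‖ ^ 2 + ‖p.2‖ ^ 2) ∧
        Function.Surjective W) ∧
      (∀ d : D, W ((d : H0), (0 : H1)) = ((V d : H0), 0)) ↔
      (∃ (A1 : H1 →L[ℂ] H1) (B1 : Dᗮ →L[ℂ] H1) (C1 : H1 →L[ℂ] Dstᗮ) (D1 : Dᗮ →L[ℂ] Dstᗮ),
        -- `U1 = [[A1,B1],[C1,D1]]` is a unitary colligation
        (∀ (h1 : H1) (δ : Dᗮ),
            ‖A1 h1 + B1 δ‖ ^ 2 + ‖C1 h1 + D1 δ‖ ^ 2 = ‖h1‖ ^ 2 + ‖δ‖ ^ 2) ∧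
        (∀ (y : H1) (ε : Dstᗮ), ∃ (h1 : H1) (δ : Dᗮ),
            A1 h1 + B1 δ = y ∧ C1 h1 + D1 δ = ε) ∧
        -- `W` equals the feedback connection `F_ℓ(U0, U1)`
        (∀ (h : H0) (h1 : H1),
          W (h, h1) =
            ((V (Submodule.orthogonalProjectionOnto D h) : H0)
                + ((D1 (Submodule.orthogonalProjectionOnto Dᗮ h) : Dstᗮ) : H0)
                + ((C1 h1 : Dstᗮ) : H0),
              B1 (Submodule.orthogonalProjectionOnto Dᗮ h) + A1 h1)))) ∧
    -- in this case `U1` is recovered from `W`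
    (∀ (A1 : H1 →L[ℂ] H1) (B1 : Dᗮ →L[ℂ] H1) (C1 : H1 →L[ℂ] Dstᗮ) (D1 : Dᗮ →L[ℂ] Dstᗮ),
      (∀ (h : H0) (h1 : H1),
        W (h, h1) =
          ((V (Submodule.orthogonalProjectionOnto D h) : H0)
              + ((D1 (Submodule.orthogonalProjectionOnto Dᗮ h) : Dstᗮ) : H0)
              + ((C1 h1 : Dstᗮ) : H0),
            B1 (Submodule.orthogonalProjectionOnto Dᗮ h) + A1 h1)) →
      (∀ h1 : H1, A1 h1 = (W (0, h1)).2) ∧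
      (∀ δ : Dᗮ, B1 δ = (W ((δ : H0), 0)).2) ∧
      (∀ h1 : H1, C1 h1 = Submodule.orthogonalProjectionOnto Dstᗮ ((W (0, h1)).1)) ∧
      (∀ δ : Dᗮ, D1 δ = Submodule.orthogonalProjectionOnto Dstᗮ ((W ((δ : H0), 0)).1))) := by
  refine ⟨⟨?_, ?_⟩, fun A1 B1 C1 D1 hfeed => ?_⟩
  · rintro ⟨⟨hnorm, hsurj⟩, hext⟩
    obtain ⟨A1, B1, C1, D1, hW⟩ := exists_eq_feedbackConnection V W hnorm hext
    rw [hW] at hnorm hsurj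
    exact ⟨A1, B1, C1, D1, (feedbackConnection_norm_sq_iff V A1 B1 C1 D1).1 hnorm,
      (feedbackConnection_surjective_iff V A1 B1 C1 D1).1 hsurj, fun h h1 => congrFun hW (h, h1)⟩
  · rintro ⟨A1, B1, C1, D1, hnorm, hsurj, hfeed⟩
    have hW : ⇑W = feedbackConnection V A1 B1 C1 D1 := funext fun p => hfeed p.1 p.2
    rw [hW]
    exact ⟨⟨(feedbackConnection_norm_sq_iff V A1 B1 C1 D1).2 hnorm,
      (feedbackConnection_surjective_iff V A1 B1 C1 D1).2 hsurj⟩,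
      feedbackConnection_apply_mem V A1 B1 C1 D1⟩
  · have hW : ⇑W = feedbackConnection V A1 B1 C1 D1 := funext fun p => hfeed p.1 p.2
    simp only [hW, feedbackConnection_apply_inr, feedbackConnection_apply_inl_orthogonal,
      Submodule.orthogonalProjectionOnto_mem_subspace_eq_self, and_self, implies_true]
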